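/- For the grammar G constructed from a CNF formula φ by the SAT reduction, w ∈ L(G) if and only if φ is satisfiable, where w = c_m ⋯ c_1 c_0 v_1 ⋯ v_n v_{n+1} d_n ⋯ d_1. -/

import Mathlib

/-- Categories of VW-CCG over atomic categories coded by natural numbers.
`slash d X Y` is `X /ᵈ Y` where `d = true` is a forward slash `/` and
`d = false` is a backward slash `\`. -/
inductive Cat : Type where
  | atom : ℕ → Cat
  | slash : Bool → Cat → Cat → Cat
deriving DecidableEq

namespace Cat

/-- The target (innermost atomic category). -/
def target : Cat → ℕ
  | atom a => a
  | slash _ X _ => X.target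

/-- The argument stack of a category, bottom of the stack first. -/
def args : Cat → List (Bool × Cat)
  | atom _ => []
  | slash d X Y => X.args ++ [(d, Y)]

/-- The number of arguments of a category. -/
def numArgs (X : Cat) : ℕ := X.args.length

/-- The size (number of symbols) of a category. -/
def size : Cat → ℕ
  | atom _ => 1
  | slash _ X Y => X.size + Y.size + 1

/-- `ArgOccurs p X` holds if the slash–category pair `p` occurs as an
argument somewhere inside the category `X`. -/
def ArgOccurs (p : Bool × Cat) : Cat → Prop
  | atom _ => False
  | slash d X Y => (d, Y) = p ∨ ArgOccurs p X ∨ ArgOccurs p Y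

end Cat

/-- Build `A /₁ X₁ ⋯ /ₘ Xₘ` from a target and an argument list. -/
def Cat.mk' (t : ℕ) (as : List (Bool × Cat)) : Cat :=
  as.foldl (fun c p => Cat.slash p.1 c p.2) (Cat.atom t)

/-- Push additional arguments on the stack of a category. -/
def appendArgs (X : Cat) (zs : List (Bool × Cat)) : Cat :=
  zs.foldl (fun c p => Cat.slash p.1 c p.2) X

/-- A VW-CCG combinatory rule: a (forward or backward) combinatory schema of
degree `zRestr.length`, optionally restricting the target of the variable `X`,
the category `Y`, and the slashes and categories of the arguments
`/₁ Z₁ ⋯ /_d Z_d` of the secondary input. -/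
structure Rule where
  fwd : Bool
  tRestr : Option ℕ
  yRestr : Option Cat
  zRestr : List (Bool × Option Cat)

/-- The degree of a rule. -/
def Rule.degree (r : Rule) : ℕ := r.zRestr.length

/-- `r.Inst L R O` holds if `L R ⇛ O` is a ground instance of the rule `r`:
forward: `X/Y  Y/₁Z₁⋯/_dZ_d ⇛ X/₁Z₁⋯/_dZ_d`;
backward: `Y/₁Z₁⋯/_dZ_d  X\Y ⇛ X/₁Z₁⋯/_dZ_d`, respecting the restrictions. -/
def Rule.Inst (r : Rule) (L R O : Cat) : Prop :=
  ∃ (X Y : Cat) (zs : List (Bool × Cat)),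
    (∀ t, r.tRestr = some t → X.target = t) ∧
    (∀ Y', r.yRestr = some Y' → Y = Y') ∧
    List.Forall₂ (fun (p : Bool × Option Cat) (z : Bool × Cat) =>
      z.1 = p.1 ∧ ∀ Z, p.2 = some Z → z.2 = Z) r.zRestr zs ∧
    O = appendArgs X zs ∧
    (if r.fwd then L = Cat.slash true X Y ∧ R = appendArgs Y zs
     else R = Cat.slash false X Y ∧ L = appendArgs Y zs)

/-- A VW-CCG grammar: a finite lexicon assigning categories to vocabulary
symbols (coded by naturals) or to the empty string (`none`), a finite set of
combinatory rules, and a distinguished atomic category. -/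
structure Grammar where
  lex : List (Option ℕ × Cat)
  rules : List Rule
  start : ℕ

/-- A grammar is ε-free if no lexicon entry is for the empty string. -/
def Grammar.EpsFree (G : Grammar) : Prop := ∀ e ∈ G.lex, e.1 ≠ none

/-- Derivation trees: leaves carry lexicon entries (`none` = empty string),
internal nodes carry categories and have exactly two children. -/
inductive DTree where
  | leaf : Option ℕ → Cat → DTree
  | node : Cat → DTree → DTree → DTree

namespace DTree

/-- The category at the root. -/
def top : DTree → Cat
  | leaf _ X => X
  | node X _ _ => X

/-- The yield: left-to-right concatenation of the symbols at the leaves. -/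
def yield : DTree → List ℕ
  | leaf none _ => []
  | leaf (some σ) _ => [σ]
  | node _ l r => l.yield ++ r.yield

/-- The total number of nodes. -/
def nodes : DTree → ℕ
  | leaf _ _ => 1
  | node _ l r => l.nodes + r.nodes + 1

/-- `τ.Valid G`: `τ` is a derivation tree of the grammar `G`. -/
def Valid (G : Grammar) : DTree → Prop
  | leaf σ X => (σ, X) ∈ G.lex
  | node X l r => Valid G l ∧ Valid G r ∧ ∃ rl ∈ G.rules, rl.Inst l.top r.top X

/-- `τ.CatAt C`: the category `C` labels some node of `τ`. -/
def CatAt : DTree → Cat → Prop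
  | leaf _ X, C => C = X
  | node X l r, C => C = X ∨ l.CatAt C ∨ r.CatAt C

end DTree

/-- The language generated by a grammar. -/
def Grammar.Lang (G : Grammar) : Set (List ℕ) :=
  { w | ∃ τ : DTree, τ.Valid G ∧ τ.top = Cat.atom G.start ∧ τ.yield = w }

/-- CNF formulas: clauses are lists of literals (sign, variable index). -/
abbrev CNF := List (List (Bool × ℕ))

/-- Satisfiability of a CNF formula. -/
def CNF.Satisfiable (φ : CNF) : Prop :=
  ∃ σ : ℕ → Bool, ∀ c ∈ φ, ∃ l ∈ c, σ l.2 = l.1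

/-! Atomic categories of the SAT-reduction grammar (`m` = number of
clauses): `aCent` is `[¢]`, `aC i` is `[c_i]`, `aV m j b` is `[v_j = b]`. -/

def aCent : ℕ := 0
def aC (i : ℕ) : ℕ := 1 + i
def aV (m j : ℕ) (b : Bool) : ℕ := m + 2 + 2 * j + cond b 1 0

/-! Vocabulary symbols: `sC i` is `c_i`, `sV m j` is `v_j`, `sD m n j` is
`d_j`. -/

def sC (i : ℕ) : ℕ := i
def sV (m j : ℕ) : ℕ := m + j
def sD (m n j : ℕ) : ℕ := m + n + 1 + j

/-- The secondary-input restriction `𝟙_j` / `𝟘_j`: `n` forward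
slash–variable pairs with the `j`-th (1-based) position fixed to
`[v_j = b]`. -/
def oneHot (n m j : ℕ) (b : Bool) : List (Bool × Option Cat) :=
  (List.range n).map fun k =>
    (true, if k = j - 1 then some (Cat.atom (aV m j b)) else none)

/-- The ε-free VW-CCG grammar constructed from a CNF formula `φ` with `n`
variables in the NP-hardness reduction. -/
def satGrammar (n : ℕ) (φ : CNF) : Grammar :=
  let m := φ.length
  { lex :=
      -- c_0 := [c_0]/[¢]
      (some (sC 0), Cat.slash true (Cat.atom (aC 0)) (Cat.atom aCent)) ::
      -- c_i := [c_i]/[c_{i−1}] for 1 ≤ i ≤ m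
      (((List.range m).map fun i =>
          (some (sC (i + 1)), Cat.slash true (Cat.atom (aC (i + 1))) (Cat.atom (aC i)))) ++
       -- v_j := [¢]/[v_j=b]/[¢] for 1 ≤ j ≤ n, b ∈ {0,1}
       ((List.range n).flatMap fun j =>
          [true, false].map fun b =>
            (some (sV m (j + 1)),
              Cat.mk' aCent [(true, Cat.atom (aV m (j + 1) b)), (true, Cat.atom aCent)])) ++
       -- v_{n+1} := [¢]
       [(some (sV m (n + 1)), Cat.atom aCent)] ++
       -- d_j := [v_j=b]
       ((List.range n).flatMap fun j =>
          [true, false].map fun b => (some (sD m n (j + 1)), Cat.atom (aV m (j + 1) b))))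
    rules :=
      -- guessing: X/[¢]  [¢]/[v_j=b]/[¢] ⇒ X/[v_j=b]/[¢]
      ((List.range n).flatMap fun j =>
        [true, false].map fun b =>
          ⟨true, none, some (Cat.atom aCent),
            [(true, some (Cat.atom (aV m (j + 1) b))), (true, some (Cat.atom aCent))]⟩) ++
      -- X/[¢]  [¢] ⇒ X
      [⟨true, none, some (Cat.atom aCent), []⟩] ++
      -- clause checking: X/[c_{i−1}]  [c_{i−1}] 𝟙_j ⇒ X 𝟙_j (v_j in c_i), etc.
      ((List.range m).flatMap fun i =>
        (φ.getD i []).map fun l =>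
          ⟨true, none, some (Cat.atom (aC i)), oneHot n m l.2 l.1⟩) ++
      -- X/[v_j=b]  [v_j=b] ⇒ X
      ((List.range n).flatMap fun j =>
        [true, false].map fun b => ⟨true, none, some (Cat.atom (aV m (j + 1) b)), []⟩)
    start := aC m }

/-- The input string `w = c_m ⋯ c_1 c_0 v_1 ⋯ v_n v_{n+1} d_n ⋯ d_1` of the
reduction. -/
def wSAT (m n : ℕ) : List ℕ :=
  ((List.range (m + 1)).reverse.map sC) ++
  ((List.range (n + 1)).map fun j => sV m (j + 1)) ++
  ((List.range n).reverse.map fun j => sD m n (j + 1))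

/-!
Rules never create arguments: every argument of a category in a derivation is copied from the
lexical category of some leaf. In a derivation of `w`, the leaf `c_{i+1} := [c_{i+1}]/[c_i]` is
combined by a rule cancelling `[c_i]` (it cannot be a secondary input, since its only argument
`[c_i]` is not an assignment argument). Such a rule belongs to the clause checked by `c_{i+1}`
and requires its secondary input to carry an argument `[v_j = b]` for a literal `(b, j)` of
that clause; that argument comes from the category `[¢]/[v_j=b]/[¢]` chosen for the single
occurrence of `v_j` in `w`. Reading `b` off these leaves gives a satisfying assignment.
Conversely, a satisfying assignment is guessed by `c_0 v_1 ⋯ v_{n+1}`, passed through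
`c_1, …, c_m` by the clause rules of satisfied literals, and popped by `d_n ⋯ d_1`.
-/

theorem appendArgs_nil (X : Cat) : appendArgs X [] = X := rfl

theorem appendArgs_append (X : Cat) (zs ws : List (Bool × Cat)) :
    appendArgs X (zs ++ ws) = appendArgs (appendArgs X zs) ws :=
  List.foldl_append

theorem Cat.args_appendArgs (X : Cat) (zs : List (Bool × Cat)) :
    (appendArgs X zs).args = X.args ++ zs := by
  induction zs generalizing X with
  | nil => simp [appendArgs]
  | cons p zs ih => exact (ih _).trans (by simp [Cat.args])

theorem appendArgs_concat (X : Cat) (zs : List (Bool × Cat)) (p : Bool × Cat) :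
    appendArgs X (zs ++ [p]) = .slash p.1 (appendArgs X zs) p.2 :=
  appendArgs_append X zs [p]

def ArgMatches (p : Bool × Option Cat) (z : Bool × Cat) : Prop :=
  z.1 = p.1 ∧ ∀ Z, p.2 = some Z → z.2 = Z

theorem Rule.Inst.exists_of_fwd {r : Rule} (hf : r.fwd = true) {L R O : Cat} (h : r.Inst L R O) :
    ∃ X Y zs, (∀ Y', r.yRestr = some Y' → Y = Y') ∧ List.Forall₂ ArgMatches r.zRestr zs ∧
      L = Cat.slash true X Y ∧ R = appendArgs Y zs := by
  obtain ⟨X, Y, zs, -, hY, hzs, -, hLR⟩ := h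
  simp only [hf, if_true] at hLR
  exact ⟨X, Y, zs, hY, hzs, hLR⟩

theorem Rule.Inst.args_subset {r : Rule} {L R O : Cat} (h : r.Inst L R O) :
    O.args ⊆ L.args ++ R.args := by
  obtain ⟨X, Y, zs, -, -, -, rfl, hLR⟩ := h
  intro p hp
  rw [Cat.args_appendArgs] at hp
  split at hLR <;> obtain ⟨rfl, rfl⟩ := hLR <;>
    simp only [Cat.args, Cat.args_appendArgs, List.mem_append] at hp ⊢ <;> tauto

namespace DTree

def leaves : DTree → List (Option ℕ × Cat)
  | leaf s C => [(s, C)]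
  | node _ l r => l.leaves ++ r.leaves

theorem yield_eq_filterMap_leaves (τ : DTree) : τ.yield = τ.leaves.filterMap Prod.fst := by
  induction τ with
  | leaf s C => cases s <;> rfl
  | node _ l r ihl ihr => simp [yield, leaves, ihl, ihr]

theorem mem_yield_iff {τ : DTree} {s : ℕ} : s ∈ τ.yield ↔ ∃ C, (some s, C) ∈ τ.leaves := by
  simp [yield_eq_filterMap_leaves, List.mem_filterMap]

theorem eq_of_mem_leaves_of_nodup {τ : DTree} (hτ : τ.yield.Nodup) {s : ℕ} {C₁ C₂ : Cat}
    (h₁ : (some s, C₁) ∈ τ.leaves) (h₂ : (some s, C₂) ∈ τ.leaves) : C₁ = C₂ := by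
  induction τ with
  | leaf s' C =>
    simp only [leaves, List.mem_singleton, Prod.mk.injEq] at h₁ h₂
    rw [h₁.2, h₂.2]
  | node _ l r ihl ihr =>
    rw [yield, List.nodup_append] at hτ
    obtain ⟨hl, hr, hlr⟩ := hτ
    rw [leaves, List.mem_append] at h₁ h₂
    rcases h₁ with h₁ | h₁ <;> rcases h₂ with h₂ | h₂
    · exact ihl hl h₁ h₂
    · exact absurd rfl (hlr s (mem_yield_iff.2 ⟨_, h₁⟩) s (mem_yield_iff.2 ⟨_, h₂⟩))
    · exact absurd rfl (hlr s (mem_yield_iff.2 ⟨_, h₂⟩) s (mem_yield_iff.2 ⟨_, h₁⟩))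
    · exact ihr hr h₁ h₂

variable {G : Grammar}

theorem Valid.mem_lex_of_mem_leaves {τ : DTree} (hτ : τ.Valid G) {e : Option ℕ × Cat}
    (he : e ∈ τ.leaves) : e ∈ G.lex := by
  induction τ with
  | leaf s C =>
    rw [List.mem_singleton.1 he]
    exact hτ
  | node _ l r ihl ihr =>
    rcases List.mem_append.1 he with he | he
    exacts [ihl hτ.1 he, ihr hτ.2.1 he]

theorem Valid.exists_mem_leaves_of_mem_args {τ : DTree} (hτ : τ.Valid G) {p : Bool × Cat}
    (hp : p ∈ τ.top.args) : ∃ e ∈ τ.leaves, p ∈ e.2.args := by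
  induction τ with
  | leaf s C => exact ⟨(s, C), List.mem_singleton_self _, hp⟩
  | node X l r ihl ihr =>
    obtain ⟨hl, hr, rl, -, hinst⟩ := hτ
    rcases List.mem_append.1 (hinst.args_subset hp) with hp | hp
    · obtain ⟨e, he, hpe⟩ := ihl hl hp
      exact ⟨e, List.mem_append_left _ he, hpe⟩
    · obtain ⟨e, he, hpe⟩ := ihr hr hp
      exact ⟨e, List.mem_append_right _ he, hpe⟩

theorem Valid.exists_parent {τ : DTree} (hτ : τ.Valid G) {s : Option ℕ} {C : Cat}
    (he : (s, C) ∈ τ.leaves) (hne : τ ≠ leaf s C) :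
    ∃ X l r, (node X l r).Valid G ∧ (node X l r).leaves ⊆ τ.leaves ∧
      (l = leaf s C ∨ r = leaf s C) := by
  induction τ with
  | leaf s' C' =>
    simp only [leaves, List.mem_singleton, Prod.mk.injEq] at he
    exact absurd (by rw [he.1, he.2]) hne
  | node X l r ihl ihr =>
    rcases List.mem_append.1 he with he | he
    · by_cases hl : l = leaf s C
      · exact ⟨X, l, r, hτ, List.Subset.refl _, Or.inl hl⟩
      obtain ⟨X', l', r', hv, hsub, hlr⟩ := ihl hτ.1 he hl
      exact ⟨X', l', r', hv, List.Subset.trans hsub (List.subset_append_left _ _), hlr⟩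
    · by_cases hr : r = leaf s C
      · exact ⟨X, l, r, hτ, List.Subset.refl _, Or.inr hr⟩
      obtain ⟨X', l', r', hv, hsub, hlr⟩ := ihr hτ.2.1 he hr
      exact ⟨X', l', r', hv, List.Subset.trans hsub (List.subset_append_right _ _), hlr⟩

end DTree

def Grammar.Derives (G : Grammar) (C : Cat) (w : List ℕ) : Prop :=
  ∃ τ : DTree, τ.Valid G ∧ τ.top = C ∧ τ.yield = w

namespace Grammar.Derives

variable {G : Grammar}

theorem of_mem_lex {s : ℕ} {C : Cat} (h : (some s, C) ∈ G.lex) : G.Derives C [s] :=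
  ⟨.leaf (some s) C, h, rfl, rfl⟩

theorem app {r : Rule} (hr : r ∈ G.rules) {C₁ C₂ C : Cat} (hinst : r.Inst C₁ C₂ C)
    {u v : List ℕ} (h₁ : G.Derives C₁ u) (h₂ : G.Derives C₂ v) : G.Derives C (u ++ v) := by
  obtain ⟨τ₁, hv₁, rfl, rfl⟩ := h₁
  obtain ⟨τ₂, hv₂, rfl, rfl⟩ := h₂
  exact ⟨.node C τ₁ τ₂, ⟨hv₁, hv₂, r, hr, hinst⟩, rfl, rfl⟩

theorem app_fwd {Y : Cat} {zR : List (Bool × Option Cat)} (hr : ⟨true, none, some Y, zR⟩ ∈ G.rules)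
    {X : Cat} {zs : List (Bool × Cat)} (hzs : List.Forall₂ ArgMatches zR zs) {u v : List ℕ}
    (h₁ : G.Derives (.slash true X Y) u) (h₂ : G.Derives (appendArgs Y zs) v) :
    G.Derives (appendArgs X zs) (u ++ v) :=
  app hr ⟨X, Y, zs, (fun _ h => nomatch h), (fun _ => Option.some.inj), hzs, rfl, rfl, rfl⟩ h₁ h₂

end Grammar.Derives

def vCat (m j : ℕ) (b : Bool) : Cat :=
  Cat.mk' aCent [(true, Cat.atom (aV m j b)), (true, Cat.atom aCent)]

theorem aV_inj {m j j' : ℕ} {b b' : Bool} (h : aV m j b = aV m j' b') : j = j' ∧ b = b' := by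
  unfold aV at h
  cases b <;> cases b' <;>
    simp only [cond_true, cond_false, Bool.true_eq_false, Bool.false_eq_true, and_true,
      and_false] at h ⊢ <;> omega

theorem lt_aV (m j : ℕ) (b : Bool) : m + 1 < aV m j b := by
  unfold aV; omega

theorem vCat_injective (m j : ℕ) : Function.Injective (vCat m j) := fun b b' h => by
  simp only [vCat, Cat.mk', List.foldl, Cat.slash.injEq, Cat.atom.injEq, true_and, and_true] at h
  exact (aV_inj h).2

def assignmentArgs (m : ℕ) (σ : ℕ → Bool) (k : ℕ) : List (Bool × Cat) :=
  (List.range k).map fun j => (true, Cat.atom (aV m (j + 1) (σ (j + 1))))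

theorem assignmentArgs_succ (m : ℕ) (σ : ℕ → Bool) (k : ℕ) :
    assignmentArgs m σ (k + 1) =
      assignmentArgs m σ k ++ [(true, Cat.atom (aV m (k + 1) (σ (k + 1))))] := by
  simp [assignmentArgs, List.range_succ]

theorem forall₂_oneHot_assignmentArgs {n m : ℕ} {σ : ℕ → Bool} {j : ℕ} {b : Bool}
    (hj : 1 ≤ j) (hσ : σ j = b) :
    List.Forall₂ ArgMatches (oneHot n m j b) (assignmentArgs m σ n) := by
  rw [oneHot, assignmentArgs, List.forall₂_map_left_iff, List.forall₂_map_right_iff,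
    List.forall₂_same]
  intro k _
  refine ⟨rfl, fun Z hZ => ?_⟩
  split_ifs at hZ with hk
  cases hZ
  obtain rfl : k + 1 = j := by omega
  rw [hσ]

theorem mem_of_forall₂_oneHot {n m : ℕ} {j : ℕ} {b : Bool} {zs : List (Bool × Cat)}
    (h : List.Forall₂ ArgMatches (oneHot n m j b) zs) (hj₁ : 1 ≤ j) (hj₂ : j ≤ n) :
    (true, Cat.atom (aV m j b)) ∈ zs := by
  obtain ⟨hlen, hget⟩ := List.forall₂_iff_get.1 h
  have hk : j - 1 < (oneHot n m j b).length := by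
    simp only [oneHot, List.length_map, List.length_range]; omega
  obtain ⟨h₁, h₂⟩ := hget (j - 1) hk (hlen ▸ hk)
  have hz : zs[j - 1] = (true, Cat.atom (aV m j b)) := by
    simp only [oneHot, List.get_eq_getElem, List.getElem_map, List.getElem_range, if_true] at h₁ h₂
    exact Prod.ext h₁ (h₂ _ rfl)
  exact hz ▸ List.getElem_mem _

theorem wSAT_nodup (m n : ℕ) : (wSAT m n).Nodup := by
  simp only [wSAT, List.nodup_append, List.nodup_reverse, List.map_reverse,
    List.mem_append, List.mem_map, List.mem_reverse, List.mem_range]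
  refine ⟨⟨List.nodup_range.map fun _ _ h => h, List.nodup_range.map fun a b h => ?_, ?_⟩,
    List.nodup_range.map fun a b h => ?_, ?_⟩
  · simp only [sV] at h; omega
  · rintro _ ⟨a, ha, rfl⟩ _ ⟨b, hb, rfl⟩; simp only [sC, sV]; omega
  · simp only [sD] at h; omega
  · rintro _ (⟨a, ha, rfl⟩ | ⟨a, ha, rfl⟩) _ ⟨b, hb, rfl⟩ <;> simp only [sC, sV, sD] <;> omega

namespace satGrammar

variable {n : ℕ} {φ : CNF}

theorem c_mem_lex {i : ℕ} (hi : i < φ.length) :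
    (some (sC (i + 1)), Cat.slash true (Cat.atom (aC (i + 1))) (Cat.atom (aC i))) ∈
      (satGrammar n φ).lex :=
  List.mem_cons_of_mem _ <| List.mem_append_left _ <| List.mem_append_left _ <|
    List.mem_append_left _ <| List.mem_map.2 ⟨i, List.mem_range.2 hi, rfl⟩

theorem v_mem_lex {j : ℕ} (hj : j < n) (b : Bool) :
    (some (sV φ.length (j + 1)), vCat φ.length (j + 1) b) ∈ (satGrammar n φ).lex :=
  List.mem_cons_of_mem _ <| List.mem_append_left _ <| List.mem_append_left _ <|
    List.mem_append_right _ <|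
      List.mem_flatMap.2 ⟨j, List.mem_range.2 hj, by cases b <;> simp [vCat]⟩

theorem vEnd_mem_lex : (some (sV φ.length (n + 1)), Cat.atom aCent) ∈ (satGrammar n φ).lex :=
  List.mem_cons_of_mem _ <| List.mem_append_left _ <| List.mem_append_right _ <|
    List.mem_singleton_self _

theorem d_mem_lex {j : ℕ} (hj : j < n) (b : Bool) :
    (some (sD φ.length n (j + 1)), Cat.atom (aV φ.length (j + 1) b)) ∈ (satGrammar n φ).lex :=
  List.mem_cons_of_mem _ <| List.mem_append_right _ <|
    List.mem_flatMap.2 ⟨j, List.mem_range.2 hj, by cases b <;> simp⟩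

theorem guess_mem_rules {j : ℕ} (hj : j < n) (b : Bool) :
    (⟨true, none, some (Cat.atom aCent),
      [(true, some (Cat.atom (aV φ.length (j + 1) b))), (true, some (Cat.atom aCent))]⟩ : Rule) ∈
      (satGrammar n φ).rules :=
  List.mem_append_left _ <| List.mem_append_left _ <| List.mem_append_left _ <|
    List.mem_flatMap.2 ⟨j, List.mem_range.2 hj, by cases b <;> simp⟩

theorem close_mem_rules :
    (⟨true, none, some (Cat.atom aCent), []⟩ : Rule) ∈ (satGrammar n φ).rules :=
  List.mem_append_left _ <| List.mem_append_left _ <| List.mem_append_right _ <|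
    List.mem_singleton_self _

theorem clause_mem_rules {i : ℕ} (hi : i < φ.length) {l : Bool × ℕ} (hl : l ∈ φ[i]) :
    (⟨true, none, some (Cat.atom (aC i)), oneHot n φ.length l.2 l.1⟩ : Rule) ∈
      (satGrammar n φ).rules :=
  List.mem_append_left _ <| List.mem_append_right _ <| List.mem_flatMap.2
    ⟨i, List.mem_range.2 hi, List.mem_map.2 ⟨l, by rwa [List.getD_eq_getElem _ _ hi], rfl⟩⟩

theorem pop_mem_rules {j : ℕ} (hj : j < n) (b : Bool) :
    (⟨true, none, some (Cat.atom (aV φ.length (j + 1) b)), []⟩ : Rule) ∈ (satGrammar n φ).rules :=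
  List.mem_append_right _ <| List.mem_flatMap.2 ⟨j, List.mem_range.2 hj, by cases b <;> simp⟩

theorem eq_of_mem_lex_sC_succ {i : ℕ} (hi : i < φ.length) {C : Cat}
    (h : (some (sC (i + 1)), C) ∈ (satGrammar n φ).lex) :
    C = Cat.slash true (Cat.atom (aC (i + 1))) (Cat.atom (aC i)) := by
  simp only [satGrammar, List.mem_cons, List.mem_append, List.mem_map, List.mem_flatMap,
    List.mem_range, Prod.mk.injEq, List.not_mem_nil, or_false, Option.some.injEq] at h
  rcases h with ⟨h, -⟩ | ((⟨a, -, h, rfl⟩ | ⟨a, -, b, -, h, -⟩) | ⟨h, -⟩) | ⟨a, -, b, -, h, -⟩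
  · simp [sC] at h
  · obtain rfl : a = i := by simp only [sC] at h; omega
    rfl
  all_goals simp only [sC, sV, sD] at h; omega

theorem eq_vCat_of_mem_lex {s : Option ℕ} {C : Cat} (h : (s, C) ∈ (satGrammar n φ).lex)
    {j : ℕ} {b : Bool} (hj : (true, Cat.atom (aV φ.length j b)) ∈ C.args) :
    s = some (sV φ.length j) ∧ C = vCat φ.length j b := by
  simp only [satGrammar, List.mem_cons, List.mem_append, List.mem_map, List.mem_flatMap,
    List.mem_range, Prod.mk.injEq, List.not_mem_nil, or_false] at h
  have := lt_aV φ.length j b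
  rcases h with ⟨-, rfl⟩ | ((⟨a, ha, -, rfl⟩ | ⟨a, -, b', -, rfl, rfl⟩) | ⟨-, rfl⟩) |
      ⟨a, -, b', -, -, rfl⟩ <;>
    simp only [Cat.args, Cat.mk', List.foldl, List.nil_append, List.cons_append, List.mem_cons,
      List.not_mem_nil, Prod.mk.injEq, Cat.atom.injEq, true_and,
      or_false] at hj
  · simp only [aCent] at hj; omega
  · simp only [aC] at hj; omega
  · rcases hj with hj | hj
    · obtain ⟨rfl, rfl⟩ := aV_inj hj
      exact ⟨rfl, rfl⟩
    · simp only [aCent] at hj; omega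

theorem fwd_and_yRestr_atom_of_mem_rules {r : Rule} (h : r ∈ (satGrammar n φ).rules) :
    r.fwd = true ∧ ∃ a, r.yRestr = some (Cat.atom a) := by
  simp only [satGrammar, List.mem_cons, List.mem_append, List.mem_map, List.mem_flatMap,
    List.mem_range, List.not_mem_nil, or_false] at h
  rcases h with ((⟨j, -, b, -, rfl⟩ | rfl) | ⟨i, -, l, -, rfl⟩) | ⟨j, -, b, -, rfl⟩ <;>
    exact ⟨rfl, _, rfl⟩

theorem zRestr_eq_oneHot_of_yRestr_eq_aC {r : Rule} (h : r ∈ (satGrammar n φ).rules) {i : ℕ}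
    (hi : i ≤ φ.length) (hY : r.yRestr = some (Cat.atom (aC i))) :
    ∃ hi : i < φ.length, ∃ l ∈ φ[i], r.zRestr = oneHot n φ.length l.2 l.1 := by
  simp only [satGrammar, List.mem_cons, List.mem_append, List.mem_map, List.mem_flatMap,
    List.mem_range, List.not_mem_nil, or_false] at h
  rcases h with ((⟨j, -, b, -, rfl⟩ | rfl) | ⟨i', hi', l, hl, rfl⟩) | ⟨j, -, b, -, rfl⟩ <;>
    simp only [Option.some.injEq, Cat.atom.injEq] at hY
  · simp only [aC, aCent] at hY; omega
  · simp only [aC, aCent] at hY; omega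
  · obtain rfl : i' = i := by simp only [aC] at hY; omega
    exact ⟨hi', l, by rwa [List.getD_eq_getElem _ _ hi'] at hl, rfl⟩
  · have := lt_aV φ.length (j + 1) b
    simp only [aC] at hY; omega

section

variable (σ : ℕ → Bool)

theorem derives_guess {k : ℕ} (hk : k ≤ n) :
    (satGrammar n φ).Derives
      (appendArgs (Cat.atom (aC 0)) (assignmentArgs φ.length σ k ++ [(true, Cat.atom aCent)]))
      (sC 0 :: (List.range k).map fun j => sV φ.length (j + 1)) := by
  induction k with
  | zero => exact .of_mem_lex List.mem_cons_self
  | succ k ih =>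
    have h := Grammar.Derives.app_fwd (guess_mem_rules (by omega : k < n) (σ (k + 1)))
      (.cons ⟨rfl, fun _ => Option.some.inj⟩ (.cons ⟨rfl, fun _ => Option.some.inj⟩ .nil))
      (appendArgs_concat .. ▸ ih (by omega)) (.of_mem_lex (v_mem_lex (by omega) (σ (k + 1))))
    rw [← appendArgs_append] at h
    simpa [assignmentArgs_succ, List.range_succ] using h

theorem derives_close :
    (satGrammar n φ).Derives (appendArgs (Cat.atom (aC 0)) (assignmentArgs φ.length σ n))
      (sC 0 :: (List.range (n + 1)).map fun j => sV φ.length (j + 1)) := by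
  have h := Grammar.Derives.app_fwd (close_mem_rules (n := n) (φ := φ)) .nil
    (appendArgs_concat .. ▸ derives_guess σ le_rfl) (.of_mem_lex vEnd_mem_lex)
  simpa [List.range_succ, appendArgs_nil] using h

theorem derives_clause (hσ : ∀ c ∈ φ, ∃ l ∈ c, σ l.2 = l.1) (hpos : ∀ c ∈ φ, ∀ l ∈ c, 1 ≤ l.2)
    {i : ℕ} (hi : i ≤ φ.length) :
    (satGrammar n φ).Derives (appendArgs (Cat.atom (aC i)) (assignmentArgs φ.length σ n))
      ((List.range (i + 1)).reverse.map sC ++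
        (List.range (n + 1)).map fun j => sV φ.length (j + 1)) := by
  induction i with
  | zero => simpa using derives_close σ
  | succ i ih =>
    obtain ⟨l, hl, hσl⟩ := hσ _ (List.getElem_mem (by omega : i < φ.length))
    have h := Grammar.Derives.app_fwd (clause_mem_rules (by omega) hl)
      (forall₂_oneHot_assignmentArgs (hpos _ (List.getElem_mem _) l hl) hσl)
      (.of_mem_lex (c_mem_lex (by omega))) (ih (by omega))
    simpa [List.range_succ] using h

theorem derives_pop {u : List ℕ}
    (hu : (satGrammar n φ).Derives
      (appendArgs (Cat.atom (aC φ.length)) (assignmentArgs φ.length σ n)) u) :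
    ∀ t k, k + t = n → (satGrammar n φ).Derives
      (appendArgs (Cat.atom (aC φ.length)) (assignmentArgs φ.length σ k))
      (u ++ (List.range' k t).reverse.map fun j => sD φ.length n (j + 1)) := by
  intro t
  induction t with
  | zero => rintro k rfl; simpa using hu
  | succ t ih =>
    intro k hk
    have h := Grammar.Derives.app_fwd (pop_mem_rules (by omega : k < n) (σ (k + 1))) .nil
      (appendArgs_concat .. ▸ assignmentArgs_succ .. ▸ ih (k + 1) (by omega))
      (.of_mem_lex (d_mem_lex (by omega) (σ (k + 1))))
    simpa [List.range'_succ, appendArgs_nil] using h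

end

theorem exists_literal_of_inst (hvars : ∀ c ∈ φ, ∀ l ∈ c, 1 ≤ l.2 ∧ l.2 ≤ n) {r : Rule}
    (hr : r ∈ (satGrammar n φ).rules) {L R O : Cat} (h : r.Inst L R O) :
    ∃ X a zs, L = .slash true X (.atom a) ∧ R = appendArgs (.atom a) zs ∧
      ∀ i ≤ φ.length, a = aC i →
        ∃ hi : i < φ.length, ∃ l ∈ φ[i], (true, Cat.atom (aV φ.length l.2 l.1)) ∈ zs := by
  obtain ⟨hf, a, ha⟩ := fwd_and_yRestr_atom_of_mem_rules hr
  obtain ⟨X, Y, zs, hY, hzs, hL, hR⟩ := h.exists_of_fwd hf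
  obtain rfl := hY _ ha
  refine ⟨X, a, zs, hL, hR, fun i hi hai => ?_⟩
  obtain ⟨hi, l, hl, hz⟩ := zRestr_eq_oneHot_of_yRestr_eq_aC hr hi (hai ▸ ha)
  obtain ⟨hl₁, hl₂⟩ := hvars _ (List.getElem_mem hi) l hl
  exact ⟨hi, l, hl, mem_of_forall₂_oneHot (hz ▸ hzs) hl₁ hl₂⟩

theorem exists_vLeaf_of_mem_lang (hvars : ∀ c ∈ φ, ∀ l ∈ c, 1 ≤ l.2 ∧ l.2 ≤ n) {τ : DTree}
    (hv : τ.Valid (satGrammar n φ)) (htop : τ.top = .atom (aC φ.length))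
    (hy : τ.yield = wSAT φ.length n) {i : ℕ} (hi : i < φ.length) :
    ∃ l ∈ φ[i], (some (sV φ.length l.2), vCat φ.length l.2 l.1) ∈ τ.leaves := by
  have hc : sC (i + 1) ∈ τ.yield := by
    rw [hy, wSAT]
    exact List.mem_append_left _ <| List.mem_append_left _ <|
      List.mem_map.2 ⟨i + 1, List.mem_reverse.2 (List.mem_range.2 (by omega)), rfl⟩
  obtain ⟨C, hC⟩ := DTree.mem_yield_iff.1 hc
  obtain rfl := eq_of_mem_lex_sC_succ hi (hv.mem_lex_of_mem_leaves hC)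
  obtain ⟨X, l, r, ⟨-, hr, rl, hrl, hinst⟩, hsub, hlr⟩ :=
    hv.exists_parent hC (by rintro rfl; cases htop)
  obtain ⟨X', a, zs, hL, hR, hlit⟩ := exists_literal_of_inst hvars hrl hinst
  rcases hlr with rfl | rfl
  · obtain ⟨-, -, ha⟩ := Cat.slash.inj hL
    obtain ⟨_, lit, hl, hz⟩ := hlit i hi.le (Cat.atom.inj ha).symm
    obtain ⟨e, he, harg⟩ := hr.exists_mem_leaves_of_mem_args
      (hR ▸ (Cat.args_appendArgs _ _ ▸ List.mem_append_right _ hz))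
    obtain ⟨hs, hC⟩ := eq_vCat_of_mem_lex (hr.mem_lex_of_mem_leaves he) harg
    refine ⟨lit, hl, hsub (List.mem_append_right _ ?_)⟩
    rwa [← hs, ← hC]
  · obtain rfl : zs = [(true, .atom (aC i))] := by
      simpa [DTree.top, Cat.args, Cat.args_appendArgs] using (congrArg Cat.args hR).symm
    obtain ⟨-, lit, -, hz⟩ := hlit (i + 1) hi (Cat.atom.inj (Cat.slash.inj hR).2.1).symm
    have := lt_aV φ.length lit.2 lit.1
    simp only [List.mem_singleton, Prod.mk.injEq, Cat.atom.injEq, true_and, aC] at hz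
    omega

theorem satisfiable_of_mem_lang (hvars : ∀ c ∈ φ, ∀ l ∈ c, 1 ≤ l.2 ∧ l.2 ≤ n)
    (h : wSAT φ.length n ∈ (satGrammar n φ).Lang) : φ.Satisfiable := by
  obtain ⟨τ, hv, htop, hy⟩ := h
  refine ⟨fun j => decide ((some (sV φ.length j), vCat φ.length j true) ∈ τ.leaves), fun c hc => ?_⟩
  obtain ⟨i, hi, rfl⟩ := List.getElem_of_mem hc
  obtain ⟨l, hl, hleaf⟩ := exists_vLeaf_of_mem_lang hvars hv htop hy hi
  have hunique : ∀ b, (some (sV φ.length l.2), vCat φ.length l.2 b) ∈ τ.leaves → b = l.1 :=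
    fun b hb => vCat_injective _ _ (DTree.eq_of_mem_leaves_of_nodup (hy ▸ wSAT_nodup _ _) hb hleaf)
  refine ⟨l, hl, ?_⟩
  cases hb : l.1
  · exact decide_eq_false fun ht => Bool.noConfusion (hb ▸ hunique true ht)
  · exact decide_eq_true (hb ▸ hleaf)

theorem mem_lang_of_satisfiable (hpos : ∀ c ∈ φ, ∀ l ∈ c, 1 ≤ l.2) (h : φ.Satisfiable) :
    wSAT φ.length n ∈ (satGrammar n φ).Lang := by
  obtain ⟨σ, hσ⟩ := h
  have h := derives_pop σ (derives_clause σ hσ hpos le_rfl) n 0 (zero_add n)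
  rw [← List.range_eq_range'] at h
  show (satGrammar n φ).Derives (.atom (aC φ.length)) _
  simpa [wSAT, List.append_assoc, assignmentArgs, appendArgs_nil] using h

end satGrammar

/-- Correctness of the SAT reduction: the constructed string is generated by
the constructed grammar if and only if the CNF formula is satisfiable. -/
theorem satGrammar_correct (n : ℕ) (φ : CNF)
    (hvars : ∀ c ∈ φ, ∀ l ∈ c, 1 ≤ l.2 ∧ l.2 ≤ n) :
    wSAT φ.length n ∈ (satGrammar n φ).Lang ↔ φ.Satisfiable :=
  ⟨satGrammar.satisfiable_of_mem_lang hvars,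
    satGrammar.mem_lang_of_satisfiable fun c hc l hl => (hvars c hc l hl).1⟩
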